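/- arXiv:2507.08518 — 5 statements merged into one kernel-verified Lean document; each statement's English description precedes it below -/
import Mathlib

section
/- For a probability distribution Q on R^d and a point z in R^d, the Tukey halfspace depth of z with respect to Q, defined as the infimum over unit vectors u of P(⟨u,X⟩ ≥ ⟨u,z⟩) for X ~ Q, equals the infimum over all non-null affine linear classifiers f(x) = ⟨w,x⟩ + b (with w ≠ 0) of twice the expected zero-one loss on the labelled distribution P_{Q+|z-} = (1/2)(Q ⊗ δ_{+1}) + (1/2)(δ_z ⊗ δ_{-1}), where the zero-one loss is L(f(x),y) = 1 if y·f(x) < 0 and 0 otherwise. -/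
open MeasureTheory RealInnerProductSpace

/-- Zero-one loss under the prediction convention: a positively labelled point is
misclassified iff `f x < 0`, and a negatively labelled point iff `f x ≥ 0`. -/
noncomputable def loss01 (t y : ℝ) : ℝ :=
  if (y = 1 ∧ t < 0) ∨ (y = -1 ∧ 0 ≤ t) then 1 else 0

/-!
Twice the risk of the classifier `x ↦ ⟪w, x⟫ + b` is `Q {⟪w, x⟫ + b < 0}`, plus `1` when `z` falls
on the nonnegative side. If `z` falls on the negative side, the misclassified set contains the
closed halfspace `{⟪w, x⟫ ≤ ⟪w, z⟫}` through `z`, so the risk dominates the depth; otherwise the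
risk is at least `1`. Conversely, the classifiers `x ↦ ⟪u, z⟫ - 1/(n+1) - ⟪u, x⟫` have risks
`Q {⟪u, x⟫ > ⟪u, z⟫ - 1/(n+1)}`, which decrease to `Q {⟪u, x⟫ ≥ ⟪u, z⟫}` by continuity of measure
from above.
-/

open Filter Topology

lemma loss01_one (t : ℝ) : loss01 t 1 = if t < 0 then 1 else 0 := by
  norm_num [loss01]

lemma loss01_neg_one (t : ℝ) : loss01 t (-1) = if 0 ≤ t then 1 else 0 := by
  norm_num [loss01]

lemma loss01_nonneg (t y : ℝ) : 0 ≤ loss01 t y := by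
  unfold loss01; split <;> norm_num

section Measure

variable {α : Type*} [MeasurableSpace α] {μ : Measure α} {f : α → ℝ}

lemma integral_loss01_one (hf : Measurable f) :
    ∫ x, loss01 (f x) 1 ∂μ = μ.real {x | f x < 0} := by
  have hind : (fun x => loss01 (f x) 1) = {x | f x < 0}.indicator 1 := by
    ext x
    simp [loss01_one, Set.indicator_apply]
  rw [hind, integral_indicator_one (measurableSet_lt hf measurable_const)]

lemma tendsto_measureReal_sub_one_div_lt [IsFiniteMeasure μ] (hf : Measurable f) (c : ℝ) :
    Tendsto (fun n : ℕ => μ.real {x | c - 1 / (n + 1) < f x}) atTop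
      (𝓝 (μ.real {x | c ≤ f x})) := by
  have hinter : ⋂ n : ℕ, {x | c - 1 / ((n : ℝ) + 1) < f x} = {x | c ≤ f x} := by
    ext x
    simp only [Set.mem_iInter, Set.mem_ofPred_eq]
    refine ⟨fun h => ?_, fun h n => by linarith [Nat.one_div_pos_of_nat (α := ℝ) (n := n)]⟩
    simpa using le_of_tendsto' (tendsto_const_nhds.sub tendsto_one_div_add_atTop_nhds_zero_nat)
      fun n => (h n).le
  have hanti : Antitone fun n : ℕ => {x | c - 1 / ((n : ℝ) + 1) < f x} := by
    intro m n hmn x (hx : c - 1 / ((n : ℝ) + 1) < f x)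
    have : 1 / ((n : ℝ) + 1) ≤ 1 / ((m : ℝ) + 1) := by gcongr
    show c - 1 / ((m : ℝ) + 1) < f x
    linarith
  have hmeas (n : ℕ) : NullMeasurableSet {x | c - 1 / ((n : ℝ) + 1) < f x} μ :=
    (measurableSet_lt measurable_const hf).nullMeasurableSet
  rw [← hinter]
  exact (ENNReal.tendsto_toReal (measure_ne_top μ _)).comp
    (tendsto_measure_iInter_atTop hmeas hanti ⟨0, measure_ne_top μ _⟩)

end Measure

section Halfspace

variable {E : Type*} [NormedAddCommGroup E] [InnerProductSpace ℝ E] [MeasurableSpace E]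
  (Q : Measure E) (z : E)

noncomputable def twiceRisk (w : E) (b : ℝ) : ℝ :=
  Q.real {x | ⟪w, x⟫ + b < 0} + loss01 (⟪w, z⟫ + b) (-1)

lemma two_mul_expected_loss01_eq_twiceRisk [OpensMeasurableSpace E] (w : E) (b : ℝ) :
    2 * ((1/2) * ∫ x, loss01 (⟪w, x⟫ + b) 1 ∂Q + (1/2) * loss01 (⟪w, z⟫ + b) (-1))
      = twiceRisk Q z w b := by
  rw [integral_loss01_one (by fun_prop), twiceRisk]
  ring

lemma twiceRisk_nonneg (w : E) (b : ℝ) : 0 ≤ twiceRisk Q z w b :=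
  add_nonneg measureReal_nonneg (loss01_nonneg _ _)

lemma exists_unit_halfspace_le_twiceRisk [IsProbabilityMeasure Q] {w : E} (hw : w ≠ 0) (b : ℝ) :
    ∃ u : E, ‖u‖ = 1 ∧ Q.real {x | ⟪u, z⟫ ≤ ⟪u, x⟫} ≤ twiceRisk Q z w b := by
  refine ⟨-(‖w‖⁻¹ • w), by
    rw [norm_neg, norm_smul, norm_inv, norm_norm, inv_mul_cancel₀ (norm_ne_zero_iff.2 hw)], ?_⟩
  rw [twiceRisk, loss01_neg_one]
  split_ifs with hz
  · linarith [measureReal_le_one (μ := Q) (s := {x | ⟪-(‖w‖⁻¹ • w), z⟫ ≤ ⟪-(‖w‖⁻¹ • w), x⟫}),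
      measureReal_nonneg (μ := Q) (s := {x | ⟪w, x⟫ + b < 0})]
  · rw [add_zero]
    refine measureReal_mono fun x hx => ?_
    simp only [Set.mem_ofPred_eq, inner_neg_left, real_inner_smul_left, neg_le_neg_iff] at hx ⊢
    have hwx : ⟪w, x⟫ ≤ ⟪w, z⟫ := le_of_mul_le_mul_left hx (by positivity)
    linarith

lemma twiceRisk_neg_sub {u : E} {ε : ℝ} (hε : 0 < ε) :
    twiceRisk Q z (-u) (⟪u, z⟫ - ε) = Q.real {x | ⟪u, z⟫ - ε < ⟪u, x⟫} := by
  have hset : {x | ⟪-u, x⟫ + (⟪u, z⟫ - ε) < 0} = {x | ⟪u, z⟫ - ε < ⟪u, x⟫} := by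
    ext x
    simp only [Set.mem_ofPred_eq, inner_neg_left]
    constructor <;> intro h <;> linarith
  rw [twiceRisk, hset, loss01_neg_one, if_neg (by rw [inner_neg_left]; linarith), add_zero]

theorem iInf_halfspace_eq_iInf_twiceRisk [OpensMeasurableSpace E] [IsProbabilityMeasure Q] :
    ⨅ u : {u : E // ‖u‖ = 1}, Q.real {x | ⟪u.1, z⟫ ≤ ⟪u.1, x⟫}
      = ⨅ p : {p : E × ℝ // p.1 ≠ 0}, twiceRisk Q z p.1.1 p.1.2 := by
  rcases isEmpty_or_nonempty {u : E // ‖u‖ = 1} with hE | hne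
  · -- `E` is trivial, so both infima range over empty types and equal the junk value `0`.
    have : IsEmpty {p : E × ℝ // p.1 ≠ 0} :=
      ⟨fun p => hE.false ⟨_, norm_smul_inv_norm (𝕜 := ℝ) p.2⟩⟩
    simp only [Real.iInf_of_isEmpty]
  have : Nonempty {p : E × ℝ // p.1 ≠ 0} :=
    hne.map fun u => ⟨(u.1, 0), norm_ne_zero_iff.mp (by simp [u.2])⟩
  have hbdd : BddBelow (Set.range fun u : {u : E // ‖u‖ = 1} =>
      Q.real {x | ⟪u.1, z⟫ ≤ ⟪u.1, x⟫}) :=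
    ⟨0, Set.forall_mem_range.2 fun _ => measureReal_nonneg⟩
  have hbdd' : BddBelow (Set.range fun p : {p : E × ℝ // p.1 ≠ 0} => twiceRisk Q z p.1.1 p.1.2) :=
    ⟨0, Set.forall_mem_range.2 fun _ => twiceRisk_nonneg Q z _ _⟩
  apply le_antisymm
  · refine le_ciInf fun p => ?_
    obtain ⟨v, hv, hle⟩ := exists_unit_halfspace_le_twiceRisk Q z p.2 p.1.2
    exact (ciInf_le hbdd ⟨v, hv⟩).trans hle
  · refine le_ciInf fun u => ge_of_tendsto' (tendsto_measureReal_sub_one_div_lt (μ := Q)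
      (f := fun x => ⟪u.1, x⟫) (by fun_prop) ⟪u.1, z⟫) fun n => ?_
    rw [← twiceRisk_neg_sub Q z (Nat.one_div_pos_of_nat (α := ℝ))]
    exact ciInf_le hbdd' ⟨(-u.1, _), neg_ne_zero.2 (norm_ne_zero_iff.mp (by simp [u.2]))⟩

end Halfspace

theorem tukey_depth_as_loss_general (d : ℕ)
    (Q : Measure (EuclideanSpace ℝ (Fin d))) [IsProbabilityMeasure Q]
    (z : EuclideanSpace ℝ (Fin d)) :
    (⨅ u : {u : EuclideanSpace ℝ (Fin d) // ‖u‖ = 1},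
      (Q {x | ⟪u.1, z⟫ ≤ ⟪u.1, x⟫}).toReal)
    = ⨅ p : {p : EuclideanSpace ℝ (Fin d) × ℝ // p.1 ≠ 0},
        2 * ((1/2) * ∫ x, loss01 (⟪p.1.1, x⟫ + p.1.2) 1 ∂Q
          + (1/2) * loss01 (⟪p.1.1, z⟫ + p.1.2) (-1)) := by
  simp only [two_mul_expected_loss01_eq_twiceRisk]
  exact iInf_halfspace_eq_iInf_twiceRisk Q z

/-- The Tukey halfspace depth equals the infimum over non-null affine linear
classifiers of twice the expected zero-one loss on the labelled distribution
`(1/2)(Q ⊗ δ₊) + (1/2)(δ_z ⊗ δ₋)`. -/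
theorem tukey_depth_as_loss (d : ℕ) (hd : 0 < d)
    (Q : Measure (EuclideanSpace ℝ (Fin d))) [IsProbabilityMeasure Q]
    (z : EuclideanSpace ℝ (Fin d)) :
    (⨅ u : {u : EuclideanSpace ℝ (Fin d) // ‖u‖ = 1},
      (Q {x | ⟪u.1, z⟫ ≤ ⟪u.1, x⟫}).toReal)
    = ⨅ p : {p : EuclideanSpace ℝ (Fin d) × ℝ // p.1 ≠ 0},
        2 * ((1/2) * ∫ x, loss01 (⟪p.1.1, x⟫ + p.1.2) 1 ∂Q
          + (1/2) * loss01 (⟪p.1.1, z⟫ + p.1.2) (-1)) :=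
  tukey_depth_as_loss_general d Q z
end

section
/- Let H be a nonempty set of classifiers f : X → R each of which is W-Lipschitz with respect to a metric c on X, and let l : R × {-1,1} → R_{≥0} be a loss function that is L-Lipschitz in its first argument. Then the loss depth D(z|Q) = inf_{f∈H} E_{(x,y)~P_{Q+|z-}} l(f(x),y) is (1/2)LW-Lipschitz in z with respect to the metric c, i.e. |D(z|Q) − D(z'|Q)| ≤ (1/2)LW · c(z,z') for all z, z' ∈ X. -/
open MeasureTheory

/-- The loss depth `D(z|Q) = inf_{f ∈ H} [(1/2) E_{x~Q} l₊(f x) + (1/2) l₋(f z)]`,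
for a nonempty class `H` of `W`-Lipschitz classifiers and a loss that is
`L`-Lipschitz in its first argument, is `(1/2)·L·W`-Lipschitz in `z`. -/
theorem lossDepth_lipschitz_in_z {X : Type*} [MetricSpace X] [MeasurableSpace X]
    (Q : Measure X) [IsProbabilityMeasure Q]
    (H : Set (X → ℝ)) (hH : H.Nonempty)
    (W L : ℝ) (hW : 0 ≤ W) (hL : 0 ≤ L)
    (hLip : ∀ f ∈ H, ∀ x y : X, |f x - f y| ≤ W * dist x y)
    (lp lm : ℝ → ℝ)
    (hlp0 : ∀ t, 0 ≤ lp t) (hlm0 : ∀ t, 0 ≤ lm t)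
    (hlpLip : ∀ s t : ℝ, |lp s - lp t| ≤ L * |s - t|)
    (hlmLip : ∀ s t : ℝ, |lm s - lm t| ≤ L * |s - t|)
    (hint : ∀ f ∈ H, Integrable (fun x => lp (f x)) Q)
    (z z' : X) :
    |(⨅ f : H, ((1/2) * ∫ x, lp (f.1 x) ∂Q + (1/2) * lm (f.1 z)))
      - (⨅ f : H, ((1/2) * ∫ x, lp (f.1 x) ∂Q + (1/2) * lm (f.1 z')))|
      ≤ (1/2) * L * W * dist z z' := by
  have hne : Nonempty H := hH.to_subtype
  set C := (1/2) * L * W * dist z z' with hC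
  have hC0 : 0 ≤ C := by positivity
  -- pointwise bound
  have key : ∀ (w w' : X) (f : H),
      (1/2) * ∫ x, lp (f.1 x) ∂Q + (1/2) * lm (f.1 w)
        ≤ ((1/2) * ∫ x, lp (f.1 x) ∂Q + (1/2) * lm (f.1 w'))
          + (1/2) * L * W * dist w w' := by
    intro w w' f
    have h1 : |lm (f.1 w) - lm (f.1 w')| ≤ L * (W * dist w w') := by
      calc |lm (f.1 w) - lm (f.1 w')| ≤ L * |f.1 w - f.1 w'| := hlmLip _ _
        _ ≤ L * (W * dist w w') :=
          mul_le_mul_of_nonneg_left (hLip f.1 f.2 w w') hL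
    have h2 : lm (f.1 w) - lm (f.1 w') ≤ L * (W * dist w w') :=
      (le_abs_self _).trans h1
    nlinarith [h2]
  -- nonnegativity / bddBelow of the ranges
  have hbdd : ∀ w : X, BddBelow (Set.range fun f : H =>
      (1/2) * ∫ x, lp (f.1 x) ∂Q + (1/2) * lm (f.1 w)) := by
    intro w
    refine ⟨0, ?_⟩
    rintro _ ⟨f, rfl⟩
    have : 0 ≤ ∫ x, lp (f.1 x) ∂Q := integral_nonneg fun x => hlp0 _
    have := hlm0 (f.1 w)
    positivity
  have main : ∀ w w' : X,
      (⨅ f : H, ((1/2) * ∫ x, lp (f.1 x) ∂Q + (1/2) * lm (f.1 w)))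
        ≤ (⨅ f : H, ((1/2) * ∫ x, lp (f.1 x) ∂Q + (1/2) * lm (f.1 w')))
          + (1/2) * L * W * dist w w' := by
    intro w w'
    rw [← sub_le_iff_le_add]
    refine le_ciInf fun f => ?_
    rw [sub_le_iff_le_add]
    exact (ciInf_le (hbdd w) f).trans (key w w' f)
  rw [abs_sub_le_iff]
  constructor
  · have := main z z'
    linarith
  · have := main z' z
    rw [dist_comm z' z] at this
    linarith
end

section
/- Let H be a nonempty set of classifiers f : X → R each W-Lipschitz with respect to a metric c, and l a loss that is L-Lipschitz in its first argument. Then for any two probability distributions Q, Q' on X, the loss depth satisfies |D(z|Q) − D(z|Q')| ≤ (1/2)LW · W_c(Q,Q'), where W_c is the 1-Wasserstein distance with cost c. -/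
open MeasureTheory

/- Transport every function along a coupling `π` of `Q` and `Q'`: the integrals of `lp ∘ f` against
`Q` and `Q'` become integrals of `lp (f x)` and `lp (f y)` against `π`, whose difference is at most
`L W d(x, y)` pointwise. This bounds the change of every term of the infimum defining the depth
uniformly in `f`, and an infimum of reals moves no more than its terms do. -/

theorem bddBelow_range_of_abs_sub_le {ι : Sort*} {a b : ι → ℝ} {ε : ℝ}
    (h : ∀ i, |a i - b i| ≤ ε) (ha : BddBelow (Set.range a)) : BddBelow (Set.range b) := by
  obtain ⟨m, hm⟩ := ha
  refine ⟨m - ε, ?_⟩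
  rintro _ ⟨i, rfl⟩
  linarith [hm ⟨i, rfl⟩, (abs_le.1 (h i)).2]

/-- `a` and `b` are bounded below together, and the infimum of an unbounded or empty family of
reals takes the junk value `0`. -/
theorem Real.abs_iInf_sub_iInf_le {ι : Sort*} {a b : ι → ℝ} {ε : ℝ} (hε : 0 ≤ ε)
    (h : ∀ i, |a i - b i| ≤ ε) : |(⨅ i, a i) - ⨅ i, b i| ≤ ε := by
  have h' : ∀ i, |b i - a i| ≤ ε := fun i => abs_sub_comm (a i) (b i) ▸ h i
  rcases isEmpty_or_nonempty ι with hι | hι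
  · simpa [Real.iInf_of_isEmpty] using hε
  by_cases ha : BddBelow (Set.range a)
  · have hb := bddBelow_range_of_abs_sub_le h ha
    rw [abs_le]
    constructor
    · have : (⨅ i, b i) - ε ≤ ⨅ i, a i :=
        le_ciInf fun i => by linarith [ciInf_le hb i, (abs_le.1 (h' i)).2]
      linarith
    · have : (⨅ i, a i) - ε ≤ ⨅ i, b i :=
        le_ciInf fun i => by linarith [ciInf_le ha i, (abs_le.1 (h i)).2]
      linarith
  · have hb : ¬BddBelow (Set.range b) := fun hb => ha (bddBelow_range_of_abs_sub_le h' hb)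
    simpa [Real.iInf_of_not_bddBelow ha, Real.iInf_of_not_bddBelow hb] using hε

theorem ENNReal.ofReal_abs_iInf_sub_iInf_le {ι : Sort*} {a b : ι → ℝ} {C : ENNReal}
    (h : ∀ i, ENNReal.ofReal |a i - b i| ≤ C) :
    ENNReal.ofReal |(⨅ i, a i) - ⨅ i, b i| ≤ C := by
  rcases eq_or_ne C ⊤ with rfl | hC
  · exact le_top
  exact (ENNReal.ofReal_le_iff_le_toReal hC).2 <| Real.abs_iInf_sub_iInf_le ENNReal.toReal_nonneg
    fun i => (ENNReal.ofReal_le_iff_le_toReal hC).1 (h i)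

theorem ofReal_abs_integral_sub_le_lintegral_of_coupling {X : Type*} [MeasurableSpace X]
    {μ ν : Measure X} {π : Measure (X × X)} (hπμ : π.map Prod.fst = μ) (hπν : π.map Prod.snd = ν)
    {g : X → ℝ} (hgμ : Integrable g μ) (hgν : Integrable g ν) :
    ENNReal.ofReal |∫ x, g x ∂μ - ∫ x, g x ∂ν| ≤ ∫⁻ p, ENNReal.ofReal |g p.1 - g p.2| ∂π := by
  subst hπμ hπν
  have h₁ : Integrable (fun p : X × X => g p.1) π :=
    (integrable_map_measure hgμ.1 measurable_fst.aemeasurable).1 hgμ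
  have h₂ : Integrable (fun p : X × X => g p.2) π :=
    (integrable_map_measure hgν.1 measurable_snd.aemeasurable).1 hgν
  rw [integral_map measurable_fst.aemeasurable hgμ.1,
    integral_map measurable_snd.aemeasurable hgν.1, ← integral_sub h₁ h₂]
  simpa only [Real.enorm_eq_ofReal_abs] using
    enorm_integral_le_lintegral_enorm fun p : X × X => g p.1 - g p.2

theorem ofReal_abs_integral_sub_le_mul_lintegral_dist_of_coupling {X : Type*} [MetricSpace X]
    [MeasurableSpace X] {μ ν : Measure X} {π : Measure (X × X)} (hπμ : π.map Prod.fst = μ)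
    (hπν : π.map Prod.snd = ν) {g : X → ℝ} (hgμ : Integrable g μ) (hgν : Integrable g ν)
    {K : ℝ} (hK : 0 ≤ K) (hg : ∀ x y, |g x - g y| ≤ K * dist x y) :
    ENNReal.ofReal |∫ x, g x ∂μ - ∫ x, g x ∂ν|
      ≤ ENNReal.ofReal K * ∫⁻ p, ENNReal.ofReal (dist p.1 p.2) ∂π := by
  calc _ ≤ ∫⁻ p, ENNReal.ofReal |g p.1 - g p.2| ∂π :=
        ofReal_abs_integral_sub_le_lintegral_of_coupling hπμ hπν hgμ hgν
    _ ≤ ∫⁻ p, ENNReal.ofReal K * ENNReal.ofReal (dist p.1 p.2) ∂π :=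
        lintegral_mono fun p => by
          rw [← ENNReal.ofReal_mul hK]
          exact ENNReal.ofReal_le_ofReal (hg p.1 p.2)
    _ = _ := lintegral_const_mul' _ _ ENNReal.ofReal_ne_top

theorem lossDepth_lipschitz_in_Q_general {X : Type*} [MetricSpace X] [MeasurableSpace X]
    (Q Q' : Measure X) [IsProbabilityMeasure Q] [IsProbabilityMeasure Q']
    (H : Set (X → ℝ))
    (W L : ℝ) (hW : 0 ≤ W) (hL : 0 ≤ L)
    (hLip : ∀ f ∈ H, ∀ x y : X, |f x - f y| ≤ W * dist x y)
    (lp lm : ℝ → ℝ)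
    (hlpLip : ∀ s t : ℝ, |lp s - lp t| ≤ L * |s - t|)
    (hint : ∀ f ∈ H, Integrable (fun x => lp (f x)) Q)
    (hint' : ∀ f ∈ H, Integrable (fun x => lp (f x)) Q')
    (z : X) :
    ENNReal.ofReal
      |(⨅ f : H, ((1/2) * ∫ x, lp (f.1 x) ∂Q + (1/2) * lm (f.1 z)))
        - (⨅ f : H, ((1/2) * ∫ x, lp (f.1 x) ∂Q' + (1/2) * lm (f.1 z)))|
      ≤ ENNReal.ofReal ((1/2) * L * W) *
        ⨅ π : {π : Measure (X × X) //
            π.map Prod.fst = Q ∧ π.map Prod.snd = Q'},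
          ∫⁻ p, ENNReal.ofReal (dist p.1 p.2) ∂π.1 := by
  have : Nonempty {π : Measure (X × X) // π.map Prod.fst = Q ∧ π.map Prod.snd = Q'} :=
    ⟨⟨Q.prod Q', Measure.map_fst_prod.trans (by simp), Measure.map_snd_prod.trans (by simp)⟩⟩
  rw [ENNReal.mul_iInf (by simp), le_iInf_iff]
  rintro ⟨π, hπQ, hπQ'⟩
  refine ENNReal.ofReal_abs_iInf_sub_iInf_le fun ⟨f, hf⟩ => ?_
  have hlpf : ∀ x y, |lp (f x) - lp (f y)| ≤ L * W * dist x y := fun x y =>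
    calc |lp (f x) - lp (f y)| ≤ L * |f x - f y| := hlpLip _ _
      _ ≤ L * (W * dist x y) := mul_le_mul_of_nonneg_left (hLip f hf x y) hL
      _ = L * W * dist x y := by ring
  calc _ = ENNReal.ofReal (1/2) * ENNReal.ofReal |∫ x, lp (f x) ∂Q - ∫ x, lp (f x) ∂Q'| := by
        rw [← ENNReal.ofReal_mul (by norm_num), ← abs_of_nonneg (by norm_num : (0:ℝ) ≤ 1/2),
          ← abs_mul]
        ring_nf
    _ ≤ ENNReal.ofReal (1/2) *
          (ENNReal.ofReal (L * W) * ∫⁻ p, ENNReal.ofReal (dist p.1 p.2) ∂π) := by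
        gcongr
        exact ofReal_abs_integral_sub_le_mul_lintegral_dist_of_coupling hπQ hπQ' (hint f hf)
          (hint' f hf) (mul_nonneg hL hW) hlpf
    _ = _ := by
        rw [← mul_assoc, ← ENNReal.ofReal_mul (by norm_num), mul_assoc]

/-- The loss depth `D(z|Q) = inf_{f∈H} [(1/2) E_{x~Q} l₊(f x) + (1/2) l₋(f z)]`
is `(1/2)·L·W`-Lipschitz in the distribution `Q` with respect to the
1-Wasserstein distance `W_c(Q,Q') = inf over couplings π of ∬ c(x,y) dπ`. -/
theorem lossDepth_lipschitz_in_Q {X : Type*} [MetricSpace X] [MeasurableSpace X]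
    [OpensMeasurableSpace X]
    (Q Q' : Measure X) [IsProbabilityMeasure Q] [IsProbabilityMeasure Q']
    (H : Set (X → ℝ)) (hH : H.Nonempty)
    (W L : ℝ) (hW : 0 ≤ W) (hL : 0 ≤ L)
    (hLip : ∀ f ∈ H, ∀ x y : X, |f x - f y| ≤ W * dist x y)
    (lp lm : ℝ → ℝ)
    (hlp0 : ∀ t, 0 ≤ lp t) (hlm0 : ∀ t, 0 ≤ lm t)
    (hlpLip : ∀ s t : ℝ, |lp s - lp t| ≤ L * |s - t|)
    (hlmLip : ∀ s t : ℝ, |lm s - lm t| ≤ L * |s - t|)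
    (hint : ∀ f ∈ H, Integrable (fun x => lp (f x)) Q)
    (hint' : ∀ f ∈ H, Integrable (fun x => lp (f x)) Q')
    (z : X) :
    ENNReal.ofReal
      |(⨅ f : H, ((1/2) * ∫ x, lp (f.1 x) ∂Q + (1/2) * lm (f.1 z)))
        - (⨅ f : H, ((1/2) * ∫ x, lp (f.1 x) ∂Q' + (1/2) * lm (f.1 z)))|
      ≤ ENNReal.ofReal ((1/2) * L * W) *
        ⨅ π : {π : Measure (X × X) //
            π.map Prod.fst = Q ∧ π.map Prod.snd = Q'},
          ∫⁻ p, ENNReal.ofReal (dist p.1 p.2) ∂π.1 :=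
  lossDepth_lipschitz_in_Q_general Q Q' H W L hW hL hLip lp lm hlpLip hint hint' z
end

section
/- Consider the regularised loss depth rD(z|Q) = E_{(x,y)~P_{Q+|z-}} l(f*(x),y), where f* is the unique minimiser over H of E_{(x,y)~P_{Q+|z-}}[l(f(x),y) + reg(f)] for a regularisation function reg : H → R_{≥0}. If f*_reg and f̂*_reg denote respectively the minimisers for Q and Q_n, then |rD(z|Q_n) − rD(z|Q)| ≤ sup_{f∈H} |E_{x~Q_n} l_+(f(x)) − E_{x~Q} l_+(f(x))| + |reg(f*_reg) − reg(f̂*_reg)|. -/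
open MeasureTheory

/-- Generalisation bound for the regularised loss depth: if `fstar` and `fhat`
are the unique minimisers over `H` of the regularised objectives under `Q` and
`Qn` respectively, then the regularised depths (the unregularised losses at the
minimisers) satisfy
`|rD(z|Qₙ) − rD(z|Q)| ≤ sup_{f∈H}|E_{Qₙ}l₊(f) − E_Q l₊(f)| + |reg fstar − reg fhat|`. -/
theorem regLossDepth_generalisation {X : Type*} [MeasurableSpace X]
    (Q Qn : Measure X) [IsProbabilityMeasure Q] [IsProbabilityMeasure Qn]
    (H : Set (X → ℝ)) (hH : H.Nonempty)
    (lp lm : ℝ → ℝ)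
    (hlp0 : ∀ t, 0 ≤ lp t) (hlm0 : ∀ t, 0 ≤ lm t)
    (reg : (X → ℝ) → ℝ) (hreg : ∀ f ∈ H, 0 ≤ reg f)
    (hint : ∀ f ∈ H, Integrable (fun x => lp (f x)) Q)
    (hintn : ∀ f ∈ H, Integrable (fun x => lp (f x)) Qn)
    (hbdd : BddAbove (Set.range fun f : H =>
      |(∫ x, lp (f.1 x) ∂Qn) - ∫ x, lp (f.1 x) ∂Q|))
    (z : X) (fstar fhat : X → ℝ) (hfstar : fstar ∈ H) (hfhat : fhat ∈ H)
    -- `fstar` is the unique minimiser of the regularised objective under `Q`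
    (hminQ : ∀ g ∈ H,
      (1/2) * ∫ x, lp (fstar x) ∂Q + (1/2) * lm (fstar z) + reg fstar
        ≤ (1/2) * ∫ x, lp (g x) ∂Q + (1/2) * lm (g z) + reg g)
    (huniqQ : ∀ g ∈ H,
      ((1/2) * ∫ x, lp (g x) ∂Q + (1/2) * lm (g z) + reg g
        = (1/2) * ∫ x, lp (fstar x) ∂Q + (1/2) * lm (fstar z) + reg fstar)
        → g = fstar)
    -- `fhat` is the unique minimiser of the regularised objective under `Qn`
    (hminQn : ∀ g ∈ H,
      (1/2) * ∫ x, lp (fhat x) ∂Qn + (1/2) * lm (fhat z) + reg fhat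
        ≤ (1/2) * ∫ x, lp (g x) ∂Qn + (1/2) * lm (g z) + reg g)
    (huniqQn : ∀ g ∈ H,
      ((1/2) * ∫ x, lp (g x) ∂Qn + (1/2) * lm (g z) + reg g
        = (1/2) * ∫ x, lp (fhat x) ∂Qn + (1/2) * lm (fhat z) + reg fhat)
        → g = fhat) :
    |((1/2) * ∫ x, lp (fhat x) ∂Qn + (1/2) * lm (fhat z))
      - ((1/2) * ∫ x, lp (fstar x) ∂Q + (1/2) * lm (fstar z))|
    ≤ (⨆ f : H, |(∫ x, lp (f.1 x) ∂Qn) - ∫ x, lp (f.1 x) ∂Q|)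
      + |reg fstar - reg fhat| := by
  set S := ⨆ f : H, |(∫ x, lp (f.1 x) ∂Qn) - ∫ x, lp (f.1 x) ∂Q| with hS
  have h1 : |(∫ x, lp (fstar x) ∂Qn) - ∫ x, lp (fstar x) ∂Q| ≤ S :=
    le_ciSup hbdd ⟨fstar, hfstar⟩
  have h2 : |(∫ x, lp (fhat x) ∂Qn) - ∫ x, lp (fhat x) ∂Q| ≤ S :=
    le_ciSup hbdd ⟨fhat, hfhat⟩
  have hm1 := hminQn fstar hfstar
  have hm2 := hminQ fhat hfhat
  rw [abs_sub_le_iff]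
  constructor <;>
  linarith [le_abs_self ((∫ x, lp (fstar x) ∂Qn) - ∫ x, lp (fstar x) ∂Q),
    neg_abs_le ((∫ x, lp (fstar x) ∂Qn) - ∫ x, lp (fstar x) ∂Q),
    le_abs_self ((∫ x, lp (fhat x) ∂Qn) - ∫ x, lp (fhat x) ∂Q),
    neg_abs_le ((∫ x, lp (fhat x) ∂Qn) - ∫ x, lp (fhat x) ∂Q),
    le_abs_self (reg fstar - reg fhat), neg_abs_le (reg fstar - reg fhat),
    abs_nonneg ((∫ x, lp (fstar x) ∂Qn) - ∫ x, lp (fstar x) ∂Q)]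
end

section
/- Let l : R × {-1,1} → R_{≥0} be a loss such that l_-(t) = l(t,-1) is monotone in t, and consider the loss depth with plain affine features: D(z|Q) = inf_{w∈R^d, b∈R} [(1/2) E_{x~Q} l_+(⟨w,x⟩+b) + (1/2) l_-(⟨w,z⟩+b)]. Then D(·|Q) is a quasi-concave function of z; equivalently, every depth region {z ∈ R^d : D(z|Q) ≥ α} is a convex set. -/
open MeasureTheory RealInnerProductSpace

/-- For a loss whose negative part `l₋` is monotone and plain affine features,
the loss depth `D(z|Q) = inf_{w,b} [(1/2) E_{x~Q} l₊(⟨w,x⟩+b) + (1/2) l₋(⟨w,z⟩+b)]`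
is quasi-concave: every depth region `{z : D(z|Q) ≥ α}` is convex. -/
theorem lossDepth_convex_regions (d : ℕ)
    (Q : Measure (EuclideanSpace ℝ (Fin d))) [IsProbabilityMeasure Q]
    (lp lm : ℝ → ℝ) (hlp0 : ∀ t, 0 ≤ lp t) (hlm0 : ∀ t, 0 ≤ lm t)
    (hmono : Monotone lm ∨ Antitone lm) (α : ℝ) :
    Convex ℝ {z : EuclideanSpace ℝ (Fin d) |
      α ≤ ⨅ p : EuclideanSpace ℝ (Fin d) × ℝ,
        ((1/2) * ∫ x, lp (⟪p.1, x⟫ + p.2) ∂Q + (1/2) * lm (⟪p.1, z⟫ + p.2))} := by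
  intro z1 h1 z2 h2 a b ha hb hab
  simp only [Set.mem_setOf_eq] at h1 h2 ⊢
  have hbdd : ∀ z : EuclideanSpace ℝ (Fin d), BddBelow (Set.range fun p : EuclideanSpace ℝ (Fin d) × ℝ =>
      ((1/2) * ∫ x, lp (⟪p.1, x⟫ + p.2) ∂Q + (1/2) * lm (⟪p.1, z⟫ + p.2))) := by
    intro z
    refine ⟨0, ?_⟩
    rintro y ⟨p, rfl⟩
    have hI : 0 ≤ ∫ x, lp (⟪p.1, x⟫ + p.2) ∂Q := integral_nonneg fun x => hlp0 _
    have := hlm0 (⟪p.1, z⟫ + p.2)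
    dsimp only
    linarith
  rw [le_ciInf_iff (hbdd _)]
  intro p
  have h1p : α ≤ (1/2) * ∫ x, lp (⟪p.1, x⟫ + p.2) ∂Q + (1/2) * lm (⟪p.1, z1⟫ + p.2) :=
    h1.trans (ciInf_le (hbdd z1) p)
  have h2p : α ≤ (1/2) * ∫ x, lp (⟪p.1, x⟫ + p.2) ∂Q + (1/2) * lm (⟪p.1, z2⟫ + p.2) :=
    h2.trans (ciInf_le (hbdd z2) p)
  set t1 := ⟪p.1, z1⟫ + p.2 with ht1
  set t2 := ⟪p.1, z2⟫ + p.2 with ht2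
  have hteq : ⟪p.1, a • z1 + b • z2⟫ + p.2 = a * t1 + b * t2 := by
    rw [inner_add_right, real_inner_smul_right, real_inner_smul_right, ht1, ht2]
    linear_combination -p.2 * hab
  rw [hteq]
  have hmin : min (lm t1) (lm t2) ≤ lm (a * t1 + b * t2) := by
    have hlo : min t1 t2 ≤ a * t1 + b * t2 := by
      have e : (a + b) * (t1 ⊓ t2) = t1 ⊓ t2 := by rw [hab, one_mul]
      have u1 := mul_le_mul_of_nonneg_left (min_le_left t1 t2) ha
      have u2 := mul_le_mul_of_nonneg_left (min_le_right t1 t2) hb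
      linarith
    have hhi : a * t1 + b * t2 ≤ max t1 t2 := by
      have e : (a + b) * (t1 ⊔ t2) = t1 ⊔ t2 := by rw [hab, one_mul]
      have u1 := mul_le_mul_of_nonneg_left (le_max_left t1 t2) ha
      have u2 := mul_le_mul_of_nonneg_left (le_max_right t1 t2) hb
      linarith
    rcases hmono with hm | hm
    · calc min (lm t1) (lm t2) = lm (min t1 t2) := (hm.map_min).symm
        _ ≤ lm (a * t1 + b * t2) := hm hlo
    · calc min (lm t1) (lm t2) = lm (max t1 t2) := (hm.map_max).symm
        _ ≤ lm (a * t1 + b * t2) := hm hhi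
  rcases le_total (lm t1) (lm t2) with h | h <;>
    simp [min_eq_left, min_eq_right, h] at hmin <;> linarith
end
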